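/- arXiv:2411.09079 — 2 statements merged into one kernel-verified Lean document; each statement's English description precedes it below -/
import Mathlib

section
/- For every natural number l there exists a constant C₀ > 0, depending only on l, μ and K, such that for every λ ≥ C₀·(T + T²), every t ∈ (0, T) and every x ∈ ℝ^N, the function v(t,x) = (λγ(t))^l·e^{2λα(t,x)} is differentiable in t and satisfies |∂ₜv(t,x)| ≤ C₀·λ^{l+2}·γ(t)^{l+2}·e^{2λα(t,x)}. -/
/-! With `γ = 1 / (t (T - t))` one has `γ' = (2t - T) γ²`, so `|γ'| ≤ T γ²`, and
`a = e^{μψ} - e^{2μK}` satisfies `|a| ≤ A := e^{2μK}`. Differentiating `(λγ)^l e^{2λaγ}`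
thus gives `|∂ₜv| ≤ (l T + 2 A T λ γ) λ^l γ^{l+1} e^{2λaγ}`, and because `γ T² ≥ 4`, the
condition `λ ≥ C (T + T²)` with `C = l + 4A + 1` makes the bracket at most `C λ² γ`. -/

open Real Set

lemma hasDerivAt_one_div_mul_sub {T t : ℝ} (ht : t * (T - t) ≠ 0) :
    HasDerivAt (fun s : ℝ => 1 / (s * (T - s))) ((2 * t - T) * (1 / (t * (T - t))) ^ 2) t := by
  have hg : HasDerivAt (fun s : ℝ => s * (T - s)) (T - 2 * t) t :=
    ((hasDerivAt_id' t).fun_mul ((hasDerivAt_const t T).fun_sub (hasDerivAt_id' t))).congr_deriv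
      (by ring)
  simp only [one_div]
  exact (hg.fun_inv ht).congr_deriv (by field_simp; ring)

lemma abs_two_mul_sub_le {T t : ℝ} (ht : t ∈ Ioo 0 T) : |2 * t - T| ≤ T :=
  abs_le.2 ⟨by linarith [ht.1], by linarith [ht.2]⟩

lemma four_le_one_div_mul_sub_mul_sq {T t : ℝ} (ht : t ∈ Ioo 0 T) :
    4 ≤ 1 / (t * (T - t)) * T ^ 2 := by
  have hpos : 0 < t * (T - t) := mul_pos ht.1 (sub_pos.2 ht.2)
  rw [one_div_mul_eq_div, le_div_iff₀ hpos]
  nlinarith [sq_nonneg (T - 2 * t)]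

lemma hasDerivAt_pow_mul_exp {u : ℝ → ℝ} {u' t : ℝ} (hu : HasDerivAt u u' t) (lam a : ℝ)
    (l : ℕ) :
    HasDerivAt (fun s => (lam * u s) ^ l * exp (2 * lam * (a * u s)))
      ((l * (lam * u t) ^ (l - 1) * lam + (lam * u t) ^ l * (2 * lam * a)) * u' *
        exp (2 * lam * (a * u t))) t :=
  (((hu.const_mul lam).fun_pow l).fun_mul ((hu.const_mul a).const_mul (2 * lam)).exp).congr_deriv
    (by ring)

lemma natCast_mul_pow_sub_one_mul (l : ℕ) (x : ℝ) : l * x ^ (l - 1) * x = l * x ^ l := by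
  rcases Nat.eq_zero_or_pos l with rfl | hl
  · simp
  · rw [mul_assoc, pow_sub_one_mul hl.ne']

lemma abs_pow_mul_exp_deriv_le {l : ℕ} {lam u u' a A T : ℝ} (hlam : 0 ≤ lam) (hu : 0 < u)
    (ha : |a| ≤ A) (hu' : |u'| ≤ T * u ^ 2) :
    |(l * (lam * u) ^ (l - 1) * lam + (lam * u) ^ l * (2 * lam * a)) * u'| ≤
      (l * T + 2 * A * T * lam * u) * lam ^ l * u ^ (l + 1) := by
  have hA : 0 ≤ A := (abs_nonneg a).trans ha
  have hcoeff : |l * (lam * u) ^ (l - 1) * lam + (lam * u) ^ l * (2 * lam * a)| ≤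
      l * (lam * u) ^ (l - 1) * lam + (lam * u) ^ l * (2 * lam * A) := by
    refine (abs_add_le _ _).trans (add_le_add (abs_of_nonneg (by positivity)).le ?_)
    rw [abs_mul, abs_of_nonneg (by positivity), abs_mul, abs_of_nonneg (by positivity)]
    gcongr
  calc _ = |l * (lam * u) ^ (l - 1) * lam + (lam * u) ^ l * (2 * lam * a)| * |u'| := abs_mul _ _
    _ ≤ (l * (lam * u) ^ (l - 1) * lam + (lam * u) ^ l * (2 * lam * A)) * (T * u ^ 2) :=
        mul_le_mul hcoeff hu' (abs_nonneg _) (by positivity)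
    _ = (l * (lam * u) ^ (l - 1) * (lam * u) + 2 * A * lam * u * (lam * u) ^ l) * T * u := by ring
    _ = _ := by rw [natCast_mul_pow_sub_one_mul]; ring

lemma mul_add_mul_le_of_mul_add_sq_le {l A C T lam γ : ℝ} (hl : l ≤ C) (hA : 4 * A ≤ C)
    (hC : 1 ≤ C) (hT : 0 < T) (hγ : 4 ≤ γ * T ^ 2) (hlam : C * (T + T ^ 2) ≤ lam) :
    l * T + 2 * A * T * lam * γ ≤ C * (lam ^ 2 * γ) := by
  have hγ0 : 0 < γ := by nlinarith
  have hlamT : C * T ≤ lam := by nlinarith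
  have hlamT2 : C * T ^ 2 ≤ lam := by nlinarith
  have hlam0 : 0 < lam := by nlinarith
  -- `λ² γ ≥ (C T)(C T²) γ ≥ 4 C² T` absorbs the first term, `λ ≥ C T ≥ 4 A T` the second.
  have h1 : 4 * C ^ 2 * T ≤ lam ^ 2 * γ :=
    calc 4 * C ^ 2 * T = C ^ 2 * T * 4 := by ring
      _ ≤ C ^ 2 * T * (γ * T ^ 2) := by gcongr
      _ = (C * T) * (C * T ^ 2) * γ := by ring
      _ ≤ lam * lam * γ := by gcongr
      _ = lam ^ 2 * γ := by ring
  have h2 : 4 * A * T ≤ lam := by nlinarith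
  have h3 : l * T ≤ lam ^ 2 * γ / 4 :=
    calc l * T ≤ C * T := by gcongr
      _ ≤ C ^ 2 * T := by gcongr; nlinarith
      _ ≤ lam ^ 2 * γ / 4 := by linarith
  have h4 : 2 * A * T * lam * γ ≤ lam ^ 2 * γ / 2 := by nlinarith [mul_pos hlam0 hγ0]
  nlinarith [mul_pos (pow_pos hlam0 2) hγ0]

lemma exists_hasDerivAt_pow_mul_exp_abs_le {l : ℕ} {A C T lam t a : ℝ} (hl : l ≤ C)
    (hA : 4 * A ≤ C) (hC : 1 ≤ C) (ha : |a| ≤ A) (hlam : C * (T + T ^ 2) ≤ lam)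
    (ht : t ∈ Ioo 0 T) :
    ∃ d : ℝ,
      HasDerivAt (fun s : ℝ => (lam * (1 / (s * (T - s)))) ^ l *
          exp (2 * lam * (a * (1 / (s * (T - s)))))) d t ∧
      |d| ≤ C * lam ^ (l + 2) * (1 / (t * (T - t))) ^ (l + 2) *
          exp (2 * lam * (a * (1 / (t * (T - t))))) := by
  have hT : 0 < T := ht.1.trans ht.2
  have hpos : 0 < t * (T - t) := mul_pos ht.1 (sub_pos.2 ht.2)
  have hlam0 : 0 ≤ lam := le_trans (by positivity) hlam
  set γ := 1 / (t * (T - t))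
  have hγ : 0 < γ := by positivity
  refine ⟨_, hasDerivAt_pow_mul_exp (hasDerivAt_one_div_mul_sub hpos.ne') lam a l, ?_⟩
  have hγ' : |(2 * t - T) * γ ^ 2| ≤ T * γ ^ 2 := by
    rw [abs_mul, abs_of_nonneg (sq_nonneg γ)]
    gcongr
    exact abs_two_mul_sub_le ht
  rw [abs_mul, abs_of_pos (exp_pos _)]
  calc _ ≤ (l * T + 2 * A * T * lam * γ) * lam ^ l * γ ^ (l + 1) *
        exp (2 * lam * (a * γ)) := by
        gcongr
        exact abs_pow_mul_exp_deriv_le hlam0 hγ ha hγ'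
    _ ≤ C * (lam ^ 2 * γ) * lam ^ l * γ ^ (l + 1) * exp (2 * lam * (a * γ)) := by
        gcongr
        exact mul_add_mul_le_of_mul_add_sq_le hl hA hC hT
          (four_le_one_div_mul_sub_mul_sq ht) hlam
    _ = _ := by ring

lemma abs_exp_mul_sub_exp_le {μ y K : ℝ} (hμ : 0 ≤ μ) (hy : |y| ≤ K) :
    |exp (μ * y) - exp (2 * μ * K)| ≤ exp (2 * μ * K) := by
  have hK : 0 ≤ K := (abs_nonneg y).trans hy
  have hle : exp (μ * y) ≤ exp (2 * μ * K) := exp_le_exp.2 (by nlinarith [le_abs_self y])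
  rw [abs_le]
  constructor <;> linarith [exp_pos (μ * y)]

theorem stmt_10_general (N : ℕ)
    (ψ : EuclideanSpace ℝ (Fin N) → ℝ) (K : ℝ)
    (hbd : BddAbove (Set.range fun x => |ψ x|)) (hK : K = ⨆ x, |ψ x|)
    (μ : ℝ) (hμ : 1 ≤ μ) (l : ℕ) :
    ∃ C₀ > 0, ∀ T > (0 : ℝ), ∀ lam : ℝ, C₀ * (T + T ^ 2) ≤ lam →
      ∀ t ∈ Set.Ioo (0 : ℝ) T, ∀ x : EuclideanSpace ℝ (Fin N),
        ∃ d : ℝ,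
          HasDerivAt (fun s : ℝ => (lam * (1 / (s * (T - s)))) ^ l *
              Real.exp (2 * lam *
                ((Real.exp (μ * ψ x) - Real.exp (2 * μ * K)) * (1 / (s * (T - s)))))) d t ∧
          |d| ≤ C₀ * lam ^ (l + 2) * (1 / (t * (T - t))) ^ (l + 2) *
              Real.exp (2 * lam *
                ((Real.exp (μ * ψ x) - Real.exp (2 * μ * K)) * (1 / (t * (T - t))))) := by
  have hψ (x : EuclideanSpace ℝ (Fin N)) : |ψ x| ≤ K := hK ▸ le_ciSup hbd x
  have hA := exp_pos (2 * μ * K)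
  refine ⟨l + 4 * exp (2 * μ * K) + 1, by positivity, fun T _ lam hlam t ht x => ?_⟩
  exact exists_hasDerivAt_pow_mul_exp_abs_le (by linarith) (by linarith) (by linarith)
    (abs_exp_mul_sub_exp_le (by linarith) (hψ x)) hlam ht

/-- For every natural number `l` there exists a constant `C₀ > 0`, depending only on
`l`, `μ` and `K`, such that for every `λ ≥ C₀·(T + T²)`, every `t ∈ (0, T)` and every
`x ∈ ℝ^N`, the function `v(t,x) = (λγ(t))^l·e^{2λα(t,x)}` is differentiable in `t` and
satisfies `|∂ₜv(t,x)| ≤ C₀·λ^{l+2}·γ(t)^{l+2}·e^{2λα(t,x)}`. -/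
theorem stmt_10 (N : ℕ) (hN : 1 ≤ N)
    (ψ : EuclideanSpace ℝ (Fin N) → ℝ) (K : ℝ)
    (hbd : BddAbove (Set.range fun x => |ψ x|)) (hK : K = ⨆ x, |ψ x|)
    (μ : ℝ) (hμ : 1 ≤ μ) (l : ℕ) :
    ∃ C₀ > 0, ∀ T > (0 : ℝ), ∀ lam : ℝ, C₀ * (T + T ^ 2) ≤ lam →
      ∀ t ∈ Set.Ioo (0 : ℝ) T, ∀ x : EuclideanSpace ℝ (Fin N),
        ∃ d : ℝ,
          HasDerivAt (fun s : ℝ => (lam * (1 / (s * (T - s)))) ^ l *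
              Real.exp (2 * lam *
                ((Real.exp (μ * ψ x) - Real.exp (2 * μ * K)) * (1 / (s * (T - s)))))) d t ∧
          |d| ≤ C₀ * lam ^ (l + 2) * (1 / (t * (T - t))) ^ (l + 2) *
              Real.exp (2 * lam *
                ((Real.exp (μ * ψ x) - Real.exp (2 * μ * K)) * (1 / (t * (T - t))))) :=
  stmt_10_general N ψ K hbd hK μ hμ l
end

section
/- Suppose in addition that ψ is continuously differentiable with K₁ = sup_{x∈ℝ^N} ‖∇ψ(x)‖ < ∞, and that ξ : ℝ^N → ℝ is continuously differentiable with 0 ≤ ξ ≤ 1 and ‖∇ξ(x)‖ ≤ M·√(ξ(x)) for all x and some constant M > 0. Then for every natural number l there exists a constant C₀ > 0, depending only on l, μ, K, K₁ and M, such that for every λ ≥ C₀·(T + T²), every t ∈ (0, T) and every x ∈ ℝ^N, the spatial gradient of x ↦ v(t,x)·ξ(x) satisfies ‖∇ₓ(v(t,x)·ξ(x))‖ ≤ C₀·λ^{l+1}·γ(t)^{l+1}·e^{2λα(t,x)}·√(ξ(x)). -/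
/-! By the product and chain rules, `∇(v ξ) = v ∇ξ + 2λγ μ e^{μψ} ξ v ∇ψ`. The first term is
bounded through `‖∇ξ‖ ≤ M √ξ`, the second through `ξ ≤ √ξ`, `ψ ≤ K` and `‖∇ψ‖ ≤ K₁`; the
condition `λ ≥ C₀ (T + T²)` with `C₀ ≥ 1` forces `λγ ≥ 1`, since `t (T - t) ≤ T²/4`, which
raises the power `(λγ)^l` of the first term to `(λγ)^(l+1)`. -/

open Real

theorem norm_gradient_eq_norm_fderiv {F : Type*} [NormedAddCommGroup F] [InnerProductSpace ℝ F]
    [CompleteSpace F] (f : F → ℝ) (x : F) : ‖gradient f x‖ = ‖fderiv ℝ f x‖ :=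
  (InnerProductSpace.toDual ℝ F).symm.norm_map _

section

variable {E : Type*} [NormedAddCommGroup E] [NormedSpace ℝ E]

theorem norm_fderiv_mul_exp_mul_le {φ ξ : E → ℝ} {x : E} {c : ℝ} (hc : 0 ≤ c)
    (hφ : DifferentiableAt ℝ φ x) (hξ : DifferentiableAt ℝ ξ x) :
    ‖fderiv ℝ (fun y => c * exp (φ y) * ξ y) x‖
      ≤ c * exp (φ x) * (‖fderiv ℝ ξ x‖ + |ξ x| * ‖fderiv ℝ φ x‖) := by
  rw [((hφ.hasFDerivAt.exp.const_mul c).fun_mul hξ.hasFDerivAt).fderiv]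
  refine (norm_add_le _ _).trans_eq ?_
  simp only [norm_smul, norm_eq_abs, abs_mul, abs_of_nonneg hc, abs_exp]
  ring

theorem norm_fderiv_mul_sub_exp_mul (a b g μ : ℝ) {ψ : E → ℝ} {x : E}
    (hψ : DifferentiableAt ℝ ψ x) :
    ‖fderiv ℝ (fun y => a * ((exp (μ * ψ y) - b) * g)) x‖
      = |a * g * μ| * exp (μ * ψ x) * ‖fderiv ℝ ψ x‖ := by
  rw [((((hψ.hasFDerivAt.const_mul μ).exp.sub_const b).mul_const g).const_mul a).fderiv]
  simp only [norm_smul, norm_eq_abs, abs_mul, abs_exp]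
  ring

end

theorem one_le_mul_one_div_mul_sub_of_add_sq_le {T t lam : ℝ} (ht : t ∈ Set.Ioo 0 T)
    (hlam : T + T ^ 2 ≤ lam) :
    1 ≤ lam * (1 / (t * (T - t))) := by
  obtain ⟨ht0, htT⟩ := ht
  rw [mul_one_div, le_div_iff₀ (mul_pos ht0 (by linarith))]
  nlinarith

theorem stmt_11_general (N : ℕ)
    (ψ : EuclideanSpace ℝ (Fin N) → ℝ) (hψ : ContDiff ℝ 1 ψ) (K K₁ : ℝ)
    (hbd : BddAbove (Set.range fun x => |ψ x|)) (hK : K = ⨆ x, |ψ x|)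
    (hbd₁ : BddAbove (Set.range fun x => ‖gradient ψ x‖))
    (hK₁ : K₁ = ⨆ x, ‖gradient ψ x‖)
    (μ : ℝ) (hμ : 1 ≤ μ)
    (ξ : EuclideanSpace ℝ (Fin N) → ℝ) (hξ : ContDiff ℝ 1 ξ)
    (hξ01 : ∀ x, 0 ≤ ξ x ∧ ξ x ≤ 1)
    (M : ℝ) (hM : 0 < M)
    (hξgrad : ∀ x, ‖gradient ξ x‖ ≤ M * Real.sqrt (ξ x)) (l : ℕ) :
    ∃ C₀ > 0, ∀ T > (0 : ℝ), ∀ lam : ℝ, C₀ * (T + T ^ 2) ≤ lam →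
      ∀ t ∈ Set.Ioo (0 : ℝ) T, ∀ x : EuclideanSpace ℝ (Fin N),
        ‖gradient (fun y => (lam * (1 / (t * (T - t)))) ^ l *
            Real.exp (2 * lam *
              ((Real.exp (μ * ψ y) - Real.exp (2 * μ * K)) * (1 / (t * (T - t))))) * ξ y) x‖
          ≤ C₀ * lam ^ (l + 1) * (1 / (t * (T - t))) ^ (l + 1) *
              Real.exp (2 * lam *
                ((Real.exp (μ * ψ x) - Real.exp (2 * μ * K)) * (1 / (t * (T - t))))) *
              Real.sqrt (ξ x) := by
  have hK₁_nonneg : 0 ≤ K₁ := hK₁ ▸ (norm_nonneg _).trans (le_ciSup hbd₁ 0)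
  set C₀ := 2 * μ * exp (μ * K) * K₁ + M + 1
  have hC₀ : 1 ≤ C₀ := by
    have : 0 ≤ 2 * μ * exp (μ * K) * K₁ := by positivity
    linarith
  refine ⟨C₀, by linarith, fun T hT lam hlam t ht x => ?_⟩
  set g := 1 / (t * (T - t))
  have hg : 0 < g := one_div_pos.2 (mul_pos ht.1 (sub_pos.2 ht.2))
  have hlam_g : 1 ≤ lam * g :=
    one_le_mul_one_div_mul_sub_of_add_sq_le ht
      ((le_mul_of_one_le_left (by positivity) hC₀).trans hlam)
  have hlam_nonneg : 0 ≤ lam := nonneg_of_mul_nonneg_left (by linarith) hg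
  have hψx : ψ x ≤ K := (le_abs_self _).trans (hK ▸ le_ciSup hbd x)
  have hDψ : ‖fderiv ℝ ψ x‖ ≤ K₁ := norm_gradient_eq_norm_fderiv ψ x ▸ hK₁ ▸ le_ciSup hbd₁ x
  have hDξ : ‖fderiv ℝ ξ x‖ ≤ M * √(ξ x) := norm_gradient_eq_norm_fderiv ξ x ▸ hξgrad x
  have hξ_le_sqrt : ξ x ≤ √(ξ x) :=
    (Real.le_sqrt (hξ01 x).1 (hξ01 x).1).2 (by nlinarith [hξ01 x])
  have hbracket : ‖fderiv ℝ ξ x‖ + |ξ x| * (|2 * lam * g * μ| * exp (μ * ψ x) * ‖fderiv ℝ ψ x‖)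
      ≤ lam * g * C₀ * √(ξ x) := by
    rw [abs_of_nonneg (hξ01 x).1, abs_of_nonneg (by positivity)]
    calc _ ≤ M * √(ξ x) + √(ξ x) * (2 * lam * g * μ * exp (μ * K) * K₁) := by
          gcongr
      _ ≤ lam * g * C₀ * √(ξ x) := by
          nlinarith [mul_nonneg (sub_nonneg.2 hlam_g) (mul_nonneg hM.le (sqrt_nonneg (ξ x))),
            mul_nonneg (by linarith : 0 ≤ lam * g) (sqrt_nonneg (ξ x))]
  have hψ_diff : DifferentiableAt ℝ ψ x := hψ.differentiable one_ne_zero x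
  rw [norm_gradient_eq_norm_fderiv]
  refine (norm_fderiv_mul_exp_mul_le (by positivity)
    (φ := fun y => 2 * lam * ((exp (μ * ψ y) - exp (2 * μ * K)) * g))
    (by fun_prop) (hξ.differentiable one_ne_zero x)).trans ?_
  rw [norm_fderiv_mul_sub_exp_mul _ _ _ _ hψ_diff]
  calc _ ≤ (lam * g) ^ l * exp (2 * lam * ((exp (μ * ψ x) - exp (2 * μ * K)) * g)) *
        (lam * g * C₀ * √(ξ x)) := by gcongr
    _ = _ := by ring

/-- Suppose `ψ` is `C¹` with bounded gradient, `K₁ = sup ‖∇ψ‖`, and `ξ` is `C¹` with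
`0 ≤ ξ ≤ 1` and `‖∇ξ‖ ≤ M·√ξ`. Then for every `l` there is `C₀ > 0`, depending only on
`l`, `μ`, `K`, `K₁` and `M`, such that for `λ ≥ C₀·(T + T²)`, `t ∈ (0,T)` and `x`,
`‖∇ₓ(v(t,x)·ξ(x))‖ ≤ C₀·λ^{l+1}·γ(t)^{l+1}·e^{2λα(t,x)}·√(ξ(x))`. -/
theorem stmt_11 (N : ℕ) (hN : 1 ≤ N)
    (ψ : EuclideanSpace ℝ (Fin N) → ℝ) (hψ : ContDiff ℝ 1 ψ) (K K₁ : ℝ)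
    (hbd : BddAbove (Set.range fun x => |ψ x|)) (hK : K = ⨆ x, |ψ x|)
    (hbd₁ : BddAbove (Set.range fun x => ‖gradient ψ x‖))
    (hK₁ : K₁ = ⨆ x, ‖gradient ψ x‖)
    (μ : ℝ) (hμ : 1 ≤ μ)
    (ξ : EuclideanSpace ℝ (Fin N) → ℝ) (hξ : ContDiff ℝ 1 ξ)
    (hξ01 : ∀ x, 0 ≤ ξ x ∧ ξ x ≤ 1)
    (M : ℝ) (hM : 0 < M)
    (hξgrad : ∀ x, ‖gradient ξ x‖ ≤ M * Real.sqrt (ξ x)) (l : ℕ) :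
    ∃ C₀ > 0, ∀ T > (0 : ℝ), ∀ lam : ℝ, C₀ * (T + T ^ 2) ≤ lam →
      ∀ t ∈ Set.Ioo (0 : ℝ) T, ∀ x : EuclideanSpace ℝ (Fin N),
        ‖gradient (fun y => (lam * (1 / (t * (T - t)))) ^ l *
            Real.exp (2 * lam *
              ((Real.exp (μ * ψ y) - Real.exp (2 * μ * K)) * (1 / (t * (T - t))))) * ξ y) x‖
          ≤ C₀ * lam ^ (l + 1) * (1 / (t * (T - t))) ^ (l + 1) *
              Real.exp (2 * lam *
                ((Real.exp (μ * ψ x) - Real.exp (2 * μ * K)) * (1 / (t * (T - t))))) *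
              Real.sqrt (ξ x) :=
  stmt_11_general N ψ hψ K K₁ hbd hK hbd₁ hK₁ μ hμ ξ hξ hξ01 M hM hξgrad l
end
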